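/- arXiv:1610.06425 — 3 statements merged into one kernel-verified Lean document; each statement's English description precedes it below -/
import Mathlib

section
/- Every polyhedral graph has a combinatorially rigid vertex, i.e., a vertex adjacent to at most three non-triangular faces. -/
open Finset
open scoped Classical

/-- A combinatorial model of a polyhedral graph (the 1-skeleton of a strictly convex
3-polytope, equivalently a 3-connected simple planar graph), recorded through its
vertex/face incidence structure together with the standard counting facts that hold
for any such graph: Euler's formula, the two handshake identities, minimal degrees,
and connectivity of the vertex-face incidence structure. -/
structure PolyhedralGraph where
  /-- number of vertices -/
  nV : ℕ
  /-- number of faces -/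
  nF : ℕ
  /-- vertex-face incidence relation of a planar embedding -/
  incident : Fin nV → Fin nF → Prop
  /-- number of edges -/
  E : ℕ
  /-- vertex degrees -/
  deg : Fin nV → ℕ
  /-- face sizes -/
  fdeg : Fin nF → ℕ
  /-- every vertex has degree at least 3 -/
  deg_ge : ∀ v, 3 ≤ deg v
  /-- every face has at least 3 sides -/
  fdeg_ge : ∀ f, 3 ≤ fdeg f
  /-- Euler's polyhedron formula `V - E + F = 2` -/
  euler : nV + nF = E + 2
  /-- each edge is incident to exactly two vertices -/
  handshake_deg : ∑ v, deg v = 2 * E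
  /-- each edge is incident to exactly two faces -/
  handshake_fdeg : ∑ f, fdeg f = 2 * E
  /-- in a planar embedding, a vertex of degree `n` is incident to exactly `n` faces -/
  deg_eq_card : ∀ v, (univ.filter fun f => incident v f).card = deg v
  /-- a face with `n` sides is incident to exactly `n` vertices -/
  fdeg_eq_card : ∀ f, (univ.filter fun v => incident v f).card = fdeg f
  /-- the graph is connected (through face incidences) -/
  conn : ∀ S : Finset (Fin nV),
    (∀ v w, (∃ f, incident v f ∧ incident w f) → (v ∈ S ↔ w ∈ S)) → S = ∅ ∨ S = univ

namespace PolyhedralGraph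

variable (P : PolyhedralGraph)

/-- `Vn P n` : the number of vertices of degree `n`. -/
noncomputable def Vn (n : ℕ) : ℕ := (univ.filter fun v => P.deg v = n).card

/-- `Fn P n` : the number of faces with `n` sides. -/
noncomputable def Fn (n : ℕ) : ℕ := (univ.filter fun f => P.fdeg f = n).card

/-- the number of non-triangular faces incident to the vertex `v`. -/
noncomputable def nontriCount (v : Fin P.nV) : ℕ :=
  (univ.filter fun f => P.incident v f ∧ P.fdeg f ≠ 3).card

/-- a vertex is (combinatorially) rigid if it is incident to at most 3 non-triangular faces. -/
def Rigid (v : Fin P.nV) : Prop := P.nontriCount v ≤ 3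

/-- the number of rigid vertices. -/
noncomputable def Vrig : ℕ := (univ.filter fun v => P.Rigid v).card

end PolyhedralGraph

/-- every polyhedral graph has a combinatorially rigid vertex,
i.e. a vertex incident to at most three non-triangular faces. -/
theorem statement2 (P : PolyhedralGraph) : ∃ v, P.Rigid v := by
  by_contra h
  push_neg at h
  have h4 : ∀ v, 4 ≤ P.nontriCount v := by
    intro v
    have := h v
    unfold PolyhedralGraph.Rigid at this
    omega
  set T : Fin P.nV → ℕ :=
    fun v => (univ.filter fun f => P.incident v f ∧ P.fdeg f = 3).card with hT
  have hsplit : ∀ v, T v + P.nontriCount v = P.deg v := by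
    intro v
    rw [← P.deg_eq_card v]
    show ((univ.filter fun f => P.incident v f ∧ P.fdeg f = 3)).card + _ = _
    unfold PolyhedralGraph.nontriCount
    rw [← Finset.filter_filter, ← Finset.filter_filter,
      Finset.card_filter_add_card_filter_not]
  -- double counting : ∑ v, T v = 3 * F₃
  have hdouble : ∑ v, T v = 3 * P.Fn 3 := by
    have h1 : ∑ v, T v = ∑ f ∈ univ.filter (fun f => P.fdeg f = 3), P.fdeg f := by
      simp only [hT, Finset.card_filter]
      rw [Finset.sum_comm, Finset.sum_filter]
      refine Finset.sum_congr rfl (fun f _ => ?_)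
      by_cases hf : P.fdeg f = 3
      · simp only [hf, and_true, if_true]
        rw [← hf, ← P.fdeg_eq_card f, Finset.card_filter]
      · simp [hf]
    rw [h1, Finset.sum_congr rfl (fun f hf => (Finset.mem_filter.mp hf).2)]
    simp only [Finset.sum_const, smul_eq_mul]
    rw [mul_comm]
    rfl
  -- the key identity over ℤ
  have hEuler : (P.nV : ℤ) + P.nF = P.E + 2 := by exact_mod_cast P.euler
  have hHd : ∑ v, (P.deg v : ℤ) = 2 * P.E := by exact_mod_cast P.handshake_deg
  have hHf : ∑ f, (P.fdeg f : ℤ) = 2 * P.E := by exact_mod_cast P.handshake_fdeg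
  have hid : ∑ v, (4 - (P.deg v : ℤ)) + ∑ f, (4 - (P.fdeg f : ℤ)) = 8 := by
    rw [Finset.sum_sub_distrib, Finset.sum_sub_distrib, hHd, hHf]
    simp only [Finset.sum_const, Finset.card_univ, Fintype.card_fin, nsmul_eq_mul]
    linarith
  have hF3 : ∑ f, (4 - (P.fdeg f : ℤ)) ≤ (P.Fn 3 : ℤ) := by
    have : (P.Fn 3 : ℤ) = ∑ f, if P.fdeg f = 3 then (1 : ℤ) else 0 := by
      unfold PolyhedralGraph.Fn
      rw [Finset.card_filter]
      push_cast
      rfl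
    rw [this]
    refine Finset.sum_le_sum (fun f _ => ?_)
    have := P.fdeg_ge f
    by_cases hf : P.fdeg f = 3
    · simp only [hf, if_true]; norm_num
    · simp only [hf, if_false]
      have : 4 ≤ P.fdeg f := by omega
      have : (4 : ℤ) ≤ (P.fdeg f : ℤ) := by exact_mod_cast this
      linarith
  -- per-vertex bound : T v ≤ deg v - 4, deg v ≥ 4
  have hTle : ∀ v, (T v : ℤ) ≤ (P.deg v : ℤ) - 4 := by
    intro v
    have h1 := hsplit v
    have h2 := h4 v
    have : T v + 4 ≤ P.deg v := by omega
    have : (T v : ℤ) + 4 ≤ (P.deg v : ℤ) := by exact_mod_cast this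
    linarith
  have hdeg4 : ∀ v, (4 : ℤ) ≤ (P.deg v : ℤ) := fun v => by
    have := hTle v
    have : (0 : ℤ) ≤ (T v : ℤ) := Int.natCast_nonneg _
    linarith [hTle v]
  have hS : (0 : ℤ) ≤ ∑ v, ((P.deg v : ℤ) - 4) :=
    Finset.sum_nonneg (fun v _ => by linarith [hdeg4 v])
  have hsum : (3 * P.Fn 3 : ℤ) ≤ ∑ v, ((P.deg v : ℤ) - 4) := by
    have : (∑ v, (T v : ℤ)) ≤ ∑ v, ((P.deg v : ℤ) - 4) :=
      Finset.sum_le_sum (fun v _ => hTle v)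
    have h2 : (∑ v, (T v : ℤ)) = 3 * P.Fn 3 := by exact_mod_cast hdouble
    linarith
  have hneg : ∑ v, (4 - (P.deg v : ℤ)) = - ∑ v, ((P.deg v : ℤ) - 4) := by
    rw [← Finset.sum_neg_distrib]
    exact Finset.sum_congr rfl (fun v _ => by ring)
  -- conclude
  have hF3ge : (8 : ℤ) + ∑ v, ((P.deg v : ℤ) - 4) ≤ (P.Fn 3 : ℤ) := by
    linarith [hid, hF3, hneg]
  linarith
end

section
/- For every polyhedral graph, 8 − V^rig ≤ F₃ ≤ 2·V^rig − 4, where V^rig is the number of rigid vertices and F₃ the number of triangular faces. -/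
open Finset
open scoped Classical

/-- `8 − V^rig ≤ F₃ ≤ 2·V^rig − 4`
(stated additively to avoid truncated natural subtraction). -/
theorem statement3 (P : PolyhedralGraph) :
    8 ≤ P.Fn 3 + P.Vrig ∧ P.Fn 3 + 4 ≤ 2 * P.Vrig := by
  classical
  -- triangle count at a vertex
  set T : Fin P.nV → ℕ := fun v =>
    (univ.filter fun f => P.incident v f ∧ P.fdeg f = 3).card with hTdef
  -- partition: triangles + non-triangles at v = deg v
  have hpart : ∀ v, T v + P.nontriCount v = P.deg v := by
    intro v
    have := Finset.card_filter_add_card_filter_not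
      (s := univ.filter fun f => P.incident v f) (p := fun f => P.fdeg f = 3)
    rw [Finset.filter_filter, Finset.filter_filter] at this
    rw [P.deg_eq_card v] at this
    simpa [hTdef, PolyhedralGraph.nontriCount] using this
  -- degree-3 vertices are rigid
  have hdeg3rig : ∀ v, P.deg v = 3 → P.Rigid v := by
    intro v hv
    have hsub : (univ.filter fun f => P.incident v f ∧ P.fdeg f ≠ 3) ⊆
        (univ.filter fun f => P.incident v f) := by
      intro f hf
      simp only [mem_filter] at hf ⊢
      exact ⟨hf.1, hf.2.1⟩
    have := Finset.card_le_card hsub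
    rw [P.deg_eq_card v, hv] at this
    exact this
  -- double counting: ∑ T = 3 * F₃
  have hT : ∑ v, T v = 3 * P.Fn 3 := by
    have h1 : ∑ v, T v = ∑ v, ∑ f, if P.incident v f ∧ P.fdeg f = 3 then 1 else 0 := by
      refine Finset.sum_congr rfl fun v _ => ?_
      exact Finset.card_filter _ _
    rw [h1, Finset.sum_comm]
    have h2 : ∀ f : Fin P.nF,
        (∑ v, if P.incident v f ∧ P.fdeg f = 3 then (1:ℕ) else 0)
        = if P.fdeg f = 3 then 3 else 0 := by
      intro f
      by_cases hf : P.fdeg f = 3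
      · simp only [hf, and_true, if_true]
        rw [← Finset.card_filter, P.fdeg_eq_card f, hf]
      · simp [hf]
    rw [Finset.sum_congr rfl fun f _ => h2 f]
    have : ∀ f : Fin P.nF, (if P.fdeg f = 3 then (3:ℕ) else 0)
        = 3 * (if P.fdeg f = 3 then 1 else 0) := by
      intro f; by_cases hf : P.fdeg f = 3 <;> simp [hf]
    rw [Finset.sum_congr rfl fun f _ => this f, ← Finset.mul_sum, ← Finset.card_filter]
    rfl
  -- cast useful facts to ℤ
  have euler : (P.nV : ℤ) + P.nF = P.E + 2 := by exact_mod_cast P.euler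
  have hdsum : ∑ v, (P.deg v : ℤ) = 2 * P.E := by exact_mod_cast P.handshake_deg
  have hfsum : ∑ f, (P.fdeg f : ℤ) = 2 * P.E := by exact_mod_cast P.handshake_fdeg
  -- ∑_f (4 - fdeg f) ≤ F₃
  have hface : 4 * (P.nF : ℤ) - 2 * P.E ≤ P.Fn 3 := by
    have h1 : ∑ f, ((4:ℤ) - P.fdeg f) ≤ ∑ f, (if P.fdeg f = 3 then (1:ℤ) else 0) := by
      refine Finset.sum_le_sum fun f _ => ?_
      have := P.fdeg_ge f
      by_cases hf : P.fdeg f = 3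
      · simp [hf]
      · have : 4 ≤ P.fdeg f := by omega
        have : (4:ℤ) ≤ P.fdeg f := by exact_mod_cast this
        simp [hf]; linarith
    rw [Finset.sum_sub_distrib, Finset.sum_const, hfsum, Finset.sum_boole] at h1
    simpa [PolyhedralGraph.Fn, card_univ, mul_comm] using h1
  -- ∑_v (4 - deg v) ≤ Vrig
  have hvert : 4 * (P.nV : ℤ) - 2 * P.E ≤ P.Vrig := by
    have h1 : ∑ v, ((4:ℤ) - P.deg v) ≤ ∑ v, (if P.Rigid v then (1:ℤ) else 0) := by
      refine Finset.sum_le_sum fun v _ => ?_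
      have := P.deg_ge v
      by_cases hv : P.deg v = 3
      · simp [hdeg3rig v hv, hv]
      · have : 4 ≤ P.deg v := by omega
        have h4 : (4:ℤ) ≤ P.deg v := by exact_mod_cast this
        by_cases hr : P.Rigid v <;> simp [hr] <;> linarith
    rw [Finset.sum_sub_distrib, Finset.sum_const, hdsum, Finset.sum_boole] at h1
    simpa [PolyhedralGraph.Vrig, card_univ, mul_comm] using h1
  -- bound ∑ T in ℤ
  have hTbound : (3 * P.Fn 3 : ℤ) ≤ 2 * P.E - 4 * P.nV + 4 * P.Vrig := by
    have h1 : ∀ v, (T v : ℤ) ≤ (P.deg v : ℤ) - (if P.Rigid v then 0 else 4) := by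
      intro v
      have hp := hpart v
      by_cases hr : P.Rigid v
      · simp only [hr, if_true]
        have : T v ≤ P.deg v := by omega
        have : (T v : ℤ) ≤ P.deg v := by exact_mod_cast this
        linarith
      · simp only [hr, if_false]
        have h4 : 4 ≤ P.nontriCount v := by
          by_contra h; exact hr (by unfold PolyhedralGraph.Rigid; omega)
        have : T v + 4 ≤ P.deg v := by omega
        have : (T v : ℤ) + 4 ≤ P.deg v := by exact_mod_cast this
        linarith
    have h2 : (∑ v, (T v : ℤ)) ≤ ∑ v, ((P.deg v : ℤ) - (if P.Rigid v then 0 else 4)) :=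
      Finset.sum_le_sum fun v _ => h1 v
    have h3 : (∑ v, (T v : ℤ)) = 3 * P.Fn 3 := by exact_mod_cast hT
    have hA : ∑ v, (if P.Rigid v then (0:ℤ) else 4) = 4 * P.nV - 4 * P.Vrig := by
      have hall : ∑ v, ((if P.Rigid v then (0:ℤ) else 4)
          + 4 * if P.Rigid v then (1:ℤ) else 0) = 4 * P.nV := by
        have hper : ∀ v : Fin P.nV, ((if P.Rigid v then (0:ℤ) else 4)
            + 4 * if P.Rigid v then (1:ℤ) else 0) = 4 := by
          intro v; by_cases hr : P.Rigid v <;> simp [hr]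
        rw [Finset.sum_congr rfl fun v _ => hper v]
        simp [Finset.sum_const, card_univ, mul_comm]
      rw [Finset.sum_add_distrib, ← Finset.mul_sum, Finset.sum_boole] at hall
      have hvr : (((univ.filter fun v => P.Rigid v).card : ℤ)) = P.Vrig := by
        simp [PolyhedralGraph.Vrig]
      rw [hvr] at hall
      linarith
    rw [h3, Finset.sum_sub_distrib, hdsum, hA] at h2
    linarith
  constructor
  · have : (8:ℤ) ≤ (P.Fn 3 : ℤ) + P.Vrig := by linarith
    exact_mod_cast this
  · have : (P.Fn 3 : ℤ) + 4 ≤ 2 * P.Vrig := by linarith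
    exact_mod_cast this
end

section
/- A polyhedral graph with exactly four rigid vertices is the tetrahedron: it has V₃ = 4, F₃ = 4, and no vertices or faces of degree/size ≥ 5, and hence is combinatorially a tetrahedron (4 vertices, all of degree 3, all faces triangles). -/
open Finset
open scoped Classical

namespace PolyhedralGraph

variable (P : PolyhedralGraph)

/-- the number of triangular faces incident to `v`. -/
noncomputable def triCount (v : Fin P.nV) : ℕ :=
  (univ.filter fun f => P.incident v f ∧ P.fdeg f = 3).card

lemma tri_add_nontri (v : Fin P.nV) : P.triCount v + P.nontriCount v = P.deg v := by
  classical
  rw [← P.deg_eq_card v, triCount, nontriCount, ← Finset.filter_filter, ← Finset.filter_filter]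
  exact Finset.card_filter_add_card_filter_not _

lemma sum_triCount : ∑ v, P.triCount v = 3 * P.Fn 3 := by
  classical
  have h1 : ∑ v, P.triCount v
      = ∑ f ∈ univ.filter (fun f => P.fdeg f = 3), (univ.filter fun v => P.incident v f).card := by
    simp only [triCount, Finset.card_filter]
    rw [Finset.sum_comm, Finset.sum_filter]
    refine Finset.sum_congr rfl fun f _ => ?_
    by_cases hf : P.fdeg f = 3 <;> simp [hf]
  rw [h1, Finset.sum_congr rfl (fun f _ => P.fdeg_eq_card f),
    Finset.sum_congr rfl (fun f hf => (Finset.mem_filter.mp hf).2),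
    Finset.sum_const, smul_eq_mul, Fn, mul_comm]

lemma rigid_of_deg3 {v : Fin P.nV} (hv : P.deg v = 3) : P.Rigid v := by
  have := P.tri_add_nontri v
  unfold Rigid; omega

end PolyhedralGraph

/-- a polyhedral graph with exactly four rigid vertices is the tetrahedron. -/
theorem statement6 (P : PolyhedralGraph) (h : P.Vrig = 4) :
    P.Vn 3 = 4 ∧ P.Fn 3 = 4 ∧
    (∀ n, 5 ≤ n → P.Vn n = 0) ∧ (∀ n, 5 ≤ n → P.Fn n = 0) ∧
    P.nV = 4 ∧ (∀ v, P.deg v = 3) ∧ (∀ f, P.fdeg f = 3) := by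
  classical
  -- basic cast facts
  have hdegsum : (∑ v, (P.deg v : ℤ)) = 2 * P.E := by exact_mod_cast congrArg (Nat.cast (R := ℤ)) P.handshake_deg
  have hfdegsum : (∑ f, (P.fdeg f : ℤ)) = 2 * P.E := by exact_mod_cast congrArg (Nat.cast (R := ℤ)) P.handshake_fdeg
  -- V3 ≤ Vrig
  have hV3le : P.Vn 3 ≤ P.Vrig := by
    apply Finset.card_le_card
    intro v hv
    simp only [Finset.mem_filter, Finset.mem_univ, true_and] at hv ⊢
    exact P.rigid_of_deg3 hv
  -- decompose vertex sum
  set A : ℤ := ∑ v ∈ univ.filter (fun v => ¬ P.deg v = 3), ((P.deg v : ℤ) - 4) with hA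
  set B : ℤ := ∑ f ∈ univ.filter (fun f => ¬ P.fdeg f = 3), ((P.fdeg f : ℤ) - 4) with hB
  have hAnn : ∀ v ∈ univ.filter (fun v => ¬ P.deg v = 3), (0:ℤ) ≤ (P.deg v : ℤ) - 4 := by
    intro v hv
    have h3 := P.deg_ge v
    have hne : P.deg v ≠ 3 := (Finset.mem_filter.mp hv).2
    have : 4 ≤ P.deg v := by omega
    have : (4:ℤ) ≤ (P.deg v : ℤ) := by exact_mod_cast this
    linarith
  have hBnn : ∀ f ∈ univ.filter (fun f => ¬ P.fdeg f = 3), (0:ℤ) ≤ (P.fdeg f : ℤ) - 4 := by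
    intro f hf
    have h3 := P.fdeg_ge f
    have hne : P.fdeg f ≠ 3 := (Finset.mem_filter.mp hf).2
    have : 4 ≤ P.fdeg f := by omega
    have : (4:ℤ) ≤ (P.fdeg f : ℤ) := by exact_mod_cast this
    linarith
  have hApos : 0 ≤ A := Finset.sum_nonneg hAnn
  have hBpos : 0 ≤ B := Finset.sum_nonneg hBnn
  have hVsplit : (∑ v, ((P.deg v : ℤ) - 4)) = -(P.Vn 3 : ℤ) + A := by
    rw [← Finset.sum_filter_add_sum_filter_not univ (fun v => P.deg v = 3)]
    have h1 : ∀ v ∈ univ.filter (fun v => P.deg v = 3), ((P.deg v : ℤ) - 4) = -1 := by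
      intro v hv
      have hv3 : P.deg v = 3 := (Finset.mem_filter.mp hv).2
      rw [hv3]; norm_num
    rw [Finset.sum_congr rfl h1, Finset.sum_const, nsmul_eq_mul, PolyhedralGraph.Vn]
    ring
  have hFsplit : (∑ f, ((P.fdeg f : ℤ) - 4)) = -(P.Fn 3 : ℤ) + B := by
    rw [← Finset.sum_filter_add_sum_filter_not univ (fun f => P.fdeg f = 3)]
    have h1 : ∀ f ∈ univ.filter (fun f => P.fdeg f = 3), ((P.fdeg f : ℤ) - 4) = -1 := by
      intro f hf
      have hf3 : P.fdeg f = 3 := (Finset.mem_filter.mp hf).2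
      rw [hf3]; norm_num
    rw [Finset.sum_congr rfl h1, Finset.sum_const, nsmul_eq_mul, PolyhedralGraph.Fn]
    ring
  have hVsum : (∑ v, ((P.deg v : ℤ) - 4)) = 2 * P.E - 4 * P.nV := by
    rw [Finset.sum_sub_distrib, hdegsum, Finset.sum_const, Finset.card_univ, Fintype.card_fin,
      nsmul_eq_mul]
    ring
  have hFsum : (∑ f, ((P.fdeg f : ℤ) - 4)) = 2 * P.E - 4 * P.nF := by
    rw [Finset.sum_sub_distrib, hfdegsum, Finset.sum_const, Finset.card_univ, Fintype.card_fin,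
      nsmul_eq_mul]
    ring
  have heuler : (P.nV : ℤ) + P.nF = P.E + 2 := by exact_mod_cast congrArg (Nat.cast (R := ℤ)) P.euler
  -- key identity: V3 + F3 = 8 + A + B
  have hident : (P.Vn 3 : ℤ) + P.Fn 3 = 8 + A + B := by
    have := hVsplit; have := hFsplit
    linarith [hVsplit, hFsplit, hVsum, hFsum, heuler]
  -- key inequality: 3 * F3 ≤ 2E - 4(nV - 4)
  have hnonrigidcard : P.Vrig + (univ.filter fun v => ¬ P.Rigid v).card = P.nV := by
    rw [PolyhedralGraph.Vrig, Finset.card_filter_add_card_filter_not,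
      Finset.card_univ, Fintype.card_fin]
  have hineq : (3 * P.Fn 3 : ℤ) ≤ 2 * P.E - 4 * ((P.nV : ℤ) - 4) := by
    have hcast : (3 * P.Fn 3 : ℤ) = ∑ v, (P.triCount v : ℤ) := by
      rw [← Nat.cast_sum]
      exact_mod_cast congrArg (Nat.cast (R := ℤ)) P.sum_triCount.symm
    rw [hcast, ← Finset.sum_filter_add_sum_filter_not univ (fun v => P.Rigid v)]
    have h1 : ∑ v ∈ univ.filter (fun v => P.Rigid v), (P.triCount v : ℤ)
        ≤ ∑ v ∈ univ.filter (fun v => P.Rigid v), (P.deg v : ℤ) := by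
      apply Finset.sum_le_sum
      intro v _
      have := P.tri_add_nontri v
      have : P.triCount v ≤ P.deg v := by omega
      exact_mod_cast this
    have h2 : ∑ v ∈ univ.filter (fun v => ¬ P.Rigid v), (P.triCount v : ℤ)
        ≤ ∑ v ∈ univ.filter (fun v => ¬ P.Rigid v), ((P.deg v : ℤ) - 4) := by
      apply Finset.sum_le_sum
      intro v hv
      have hnr : ¬ P.Rigid v := (Finset.mem_filter.mp hv).2
      have h4 : 4 ≤ P.nontriCount v := by unfold PolyhedralGraph.Rigid at hnr; omega
      have heq := P.tri_add_nontri v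
      have : (P.triCount v : ℤ) + 4 ≤ P.deg v := by
        have : P.triCount v + 4 ≤ P.deg v := by omega
        exact_mod_cast this
      linarith
    have h3 : ∑ v ∈ univ.filter (fun v => P.Rigid v), (P.deg v : ℤ)
        + ∑ v ∈ univ.filter (fun v => ¬ P.Rigid v), ((P.deg v : ℤ) - 4)
        = 2 * P.E - 4 * ((univ.filter fun v => ¬ P.Rigid v).card : ℤ) := by
      rw [Finset.sum_sub_distrib]
      rw [Finset.sum_const, nsmul_eq_mul]
      have : ∑ v ∈ univ.filter (fun v => P.Rigid v), (P.deg v : ℤ)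
          + ∑ v ∈ univ.filter (fun v => ¬ P.Rigid v), (P.deg v : ℤ) = 2 * P.E := by
        rw [Finset.sum_filter_add_sum_filter_not]
        exact hdegsum
      linarith
    have hcard : ((univ.filter fun v => ¬ P.Rigid v).card : ℤ) = (P.nV : ℤ) - 4 := by
      have := hnonrigidcard
      have : (P.Vrig : ℤ) + ((univ.filter fun v => ¬ P.Rigid v).card : ℤ) = P.nV := by
        exact_mod_cast this
      rw [h] at this
      push_cast at this ⊢
      linarith
    rw [hcard] at h3
    linarith
  -- conclude: A = 0, B = 0, V3 = 4, F3 = 4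
  have hV3le' : (P.Vn 3 : ℤ) ≤ 4 := by
    have : (P.Vn 3 : ℤ) ≤ P.Vrig := by exact_mod_cast hV3le
    rw [h] at this; exact_mod_cast this
  -- rewrite hineq using hVsum: 2E - 4nV = -V3 + A
  have hineq2 : (3 * P.Fn 3 : ℤ) ≤ -(P.Vn 3 : ℤ) + A + 16 := by
    have : (2 * P.E : ℤ) - 4 * P.nV = -(P.Vn 3 : ℤ) + A := by rw [← hVsum, hVsplit]
    linarith
  have hA0 : A = 0 := by linarith
  have hB0 : B = 0 := by linarith
  have hV3 : P.Vn 3 = 4 := by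
    have : (P.Vn 3 : ℤ) = 4 := by linarith
    exact_mod_cast this
  have hF3 : P.Fn 3 = 4 := by
    have : (P.Fn 3 : ℤ) = 4 := by linarith
    exact_mod_cast this
  -- every vertex has degree 3 or 4
  have hdeg34 : ∀ v, P.deg v = 3 ∨ P.deg v = 4 := by
    intro v
    by_cases h3 : P.deg v = 3
    · exact Or.inl h3
    · right
      have := (Finset.sum_eq_zero_iff_of_nonneg hAnn).mp hA0 v
        (Finset.mem_filter.mpr ⟨Finset.mem_univ v, h3⟩)
      have h4 : (P.deg v : ℤ) = 4 := by linarith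
      exact_mod_cast h4
  have hfdeg34 : ∀ f, P.fdeg f = 3 ∨ P.fdeg f = 4 := by
    intro f
    by_cases h3 : P.fdeg f = 3
    · exact Or.inl h3
    · right
      have := (Finset.sum_eq_zero_iff_of_nonneg hBnn).mp hB0 f
        (Finset.mem_filter.mpr ⟨Finset.mem_univ f, h3⟩)
      have h4 : (P.fdeg f : ℤ) = 4 := by linarith
      exact_mod_cast h4
  have hVn5 : ∀ n, 5 ≤ n → P.Vn n = 0 := by
    intro n hn
    rw [PolyhedralGraph.Vn, Finset.card_eq_zero, Finset.filter_eq_empty_iff]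
    intro v _
    rcases hdeg34 v with h' | h' <;> omega
  have hFn5 : ∀ n, 5 ≤ n → P.Fn n = 0 := by
    intro n hn
    rw [PolyhedralGraph.Fn, Finset.card_eq_zero, Finset.filter_eq_empty_iff]
    intro f _
    rcases hfdeg34 f with h' | h' <;> omega
  -- rigid set = degree-3 set
  have hsetEq : univ.filter (fun v => P.deg v = 3) = univ.filter (fun v => P.Rigid v) := by
    apply Finset.eq_of_subset_of_card_le
    · intro v hv
      simp only [Finset.mem_filter, Finset.mem_univ, true_and] at hv ⊢
      exact P.rigid_of_deg3 hv
    · have e1 : (univ.filter fun v => P.Rigid v).card = P.Vrig := rfl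
      have e2 : (univ.filter fun v => P.deg v = 3).card = P.Vn 3 := rfl
      rw [e1, e2]
      omega
  have hrigid_iff : ∀ v, P.Rigid v ↔ P.deg v = 3 := by
    intro v
    constructor
    · intro hr
      have : v ∈ univ.filter (fun v => P.Rigid v) := by simp [hr]
      rw [← hsetEq] at this
      exact (Finset.mem_filter.mp this).2
    · exact P.rigid_of_deg3
  -- deg-4 vertices have triCount = 0
  have htri4 : ∀ v, P.deg v = 4 → P.triCount v = 0 := by
    intro v hv
    have hnr : ¬ P.Rigid v := by rw [hrigid_iff]; omega
    have h4 : 4 ≤ P.nontriCount v := by unfold PolyhedralGraph.Rigid at hnr; omega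
    have := P.tri_add_nontri v
    omega
  -- deg-3 vertices have nontriCount = 0
  have hnontri3 : ∀ v, P.deg v = 3 → P.nontriCount v = 0 := by
    intro v hv
    -- sum over rigid vertices of triCount equals 12, and rigid degree sum is 12
    have htot : ∑ u, P.triCount u = 12 := by rw [P.sum_triCount, hF3]
    have hsplit := Finset.sum_filter_add_sum_filter_not univ (fun u => P.deg u = 3) (fun u => P.triCount u)
    have hzero : ∑ u ∈ univ.filter (fun u => ¬ P.deg u = 3), P.triCount u = 0 := by
      apply Finset.sum_eq_zero
      intro u hu
      have hne : ¬ P.deg u = 3 := (Finset.mem_filter.mp hu).2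
      rcases hdeg34 u with h' | h'
      · exact absurd h' hne
      · exact htri4 u h'
    have hrig_tri : ∑ u ∈ univ.filter (fun u => P.deg u = 3), P.triCount u = 12 := by omega
    have hrig_deg : ∑ u ∈ univ.filter (fun u => P.deg u = 3), P.deg u = 12 := by
      rw [Finset.sum_congr rfl (fun u hu => (Finset.mem_filter.mp hu).2)]
      rw [Finset.sum_const, smul_eq_mul]
      have eV : (univ.filter fun u => P.deg u = 3).card = P.Vn 3 := rfl
      rw [eV, hV3]
    have hsum_nontri : ∑ u ∈ univ.filter (fun u => P.deg u = 3), P.nontriCount u = 0 := by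
      have : ∑ u ∈ univ.filter (fun u => P.deg u = 3), (P.triCount u + P.nontriCount u)
          = 12 := by
        rw [Finset.sum_congr rfl (fun u _ => P.tri_add_nontri u)]
        exact hrig_deg
      rw [Finset.sum_add_distrib] at this
      omega
    have := Finset.sum_eq_zero_iff.mp hsum_nontri v
      (Finset.mem_filter.mpr ⟨Finset.mem_univ v, hv⟩)
    exact this
  -- incidence structure facts
  have hface3 : ∀ v f, P.incident v f → P.deg v = 3 → P.fdeg f = 3 := by
    intro v f hinc hv
    by_contra hne
    have : f ∈ univ.filter (fun f => P.incident v f ∧ P.fdeg f ≠ 3) :=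
      Finset.mem_filter.mpr ⟨Finset.mem_univ f, hinc, hne⟩
    have h0 := hnontri3 v hv
    rw [PolyhedralGraph.nontriCount, Finset.card_eq_zero] at h0
    rw [h0] at this
    exact absurd this (Finset.notMem_empty f)
  have hvert3 : ∀ v f, P.incident v f → P.fdeg f = 3 → P.deg v = 3 := by
    intro v f hinc hf
    rcases hdeg34 v with h' | h'
    · exact h'
    · exfalso
      have : f ∈ univ.filter (fun f => P.incident v f ∧ P.fdeg f = 3) :=
        Finset.mem_filter.mpr ⟨Finset.mem_univ f, hinc, hf⟩
      have h0 := htri4 v h'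
      rw [PolyhedralGraph.triCount, Finset.card_eq_zero] at h0
      rw [h0] at this
      exact absurd this (Finset.notMem_empty f)
  -- connectivity: all vertices have degree 3
  have hS := P.conn (univ.filter fun v => P.deg v = 3)
  have hSclosed : ∀ v w, (∃ f, P.incident v f ∧ P.incident w f) →
      (v ∈ univ.filter (fun v => P.deg v = 3) ↔ w ∈ univ.filter (fun v => P.deg v = 3)) := by
    intro v w ⟨f, hv, hw⟩
    simp only [Finset.mem_filter, Finset.mem_univ, true_and]
    constructor
    · intro h3; exact hvert3 w f hw (hface3 v f hv h3)
    · intro h3; exact hvert3 v f hv (hface3 w f hw h3)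
  rcases hS hSclosed with hS0 | hSu
  · exfalso
    have : P.Vn 3 = 0 := by rw [PolyhedralGraph.Vn, hS0]; simp
    omega
  · have halldeg : ∀ v, P.deg v = 3 := by
      intro v
      have : v ∈ univ.filter (fun v => P.deg v = 3) := by
        rw [hSu]; exact Finset.mem_univ v
      exact (Finset.mem_filter.mp this).2
    have hnV : P.nV = 4 := by
      have : P.Vn 3 = P.nV := by
        rw [PolyhedralGraph.Vn, hSu, Finset.card_univ, Fintype.card_fin]
      omega
    have hE : P.E = 6 := by
      have := P.handshake_deg
      rw [Finset.sum_congr rfl (fun v _ => halldeg v), Finset.sum_const, smul_eq_mul,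
        Finset.card_univ, Fintype.card_fin, hnV] at this
      omega
    have hnF : P.nF = 4 := by
      have := P.euler
      omega
    have hallfdeg : ∀ f, P.fdeg f = 3 := by
      have huniv : (univ.filter fun f => P.fdeg f = 3) = univ := by
        apply Finset.eq_univ_of_card
        have eF : (univ.filter fun f => P.fdeg f = 3).card = P.Fn 3 := rfl
        rw [eF, hF3, Fintype.card_fin, hnF]
      intro f
      have : f ∈ univ.filter (fun f => P.fdeg f = 3) := by
        rw [huniv]; exact Finset.mem_univ f
      exact (Finset.mem_filter.mp this).2
    exact ⟨hV3, hF3, hVn5, hFn5, hnV, halldeg, hallfdeg⟩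
end
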